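/- arXiv:1701.06418 — 7 statements merged into one kernel-verified Lean document; each statement's English description precedes it below -/
import Mathlib

section
/- Let θ ∈ [0, 1/2) and let ψ₀, ψ₁ : ℝ² → ℝ² be maps that are Lipschitz with constant θ. Let B ⊆ ℝ² be a nonempty compact set with ψ₀(B) ⊆ B and ψ₁(B) ⊆ B. Then there exist L ≥ 0 and a curve γ : [0,1] → ℝ² that is Lipschitz with constant L such that the attractor A = ⋂_{n≥1} ⋃_{w ∈ {0,1}ⁿ} B_w is contained in the image γ([0,1]). -/
noncomputable section

/-- The plane with the Euclidean norm. -/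
abbrev E2 : Type := EuclideanSpace ℝ (Fin 2)

/-- For a word `w = (w₁, …, wₙ) ∈ {0,1}ⁿ`, the composition
`ψ_w = ψ_{w₁} ∘ ψ_{w₂} ∘ ⋯ ∘ ψ_{wₙ}`. -/
def wordComp (ψ : Bool → E2 → E2) : (n : ℕ) → (Fin n → Bool) → E2 → E2
  | 0, _ => id
  | n + 1, w => ψ (w 0) ∘ wordComp ψ n (fun i => w i.succ)

/-- Cylinder sets: the image of `B` under the composition along the first `n`
letters of the infinite word `a`. -/
def cyl (ψ : Bool → E2 → E2) (B : Set E2) (a : ℕ → Bool) (n : ℕ) : Set E2 :=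
  wordComp ψ n (fun i => a i) '' B

section aux

variable (θ : ℝ) (ψ : Bool → E2 → E2) (B : Set E2)

theorem cyl_zero (a : ℕ → Bool) : cyl ψ B a 0 = B := by
  simp [cyl, wordComp]

theorem cyl_succ (a : ℕ → Bool) (n : ℕ) :
    cyl ψ B a (n + 1) = ψ (a 0) '' cyl ψ B (fun i => a (i + 1)) n := by
  unfold cyl
  have h1 : (fun i : Fin (n+1) => a i.val) 0 = a 0 := rfl
  have h2 : (fun i : Fin n => ((fun j : Fin (n+1) => a j.val) i.succ)) =
      (fun i : Fin n => (fun j => a (j + 1)) i.val) := by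
    funext i; simp [Fin.val_succ]
  show (ψ ((fun i : Fin (n+1) => a i.val) 0) ∘
      wordComp ψ n (fun i => (fun j : Fin (n+1) => a j.val) i.succ)) '' B = _
  rw [h2, Set.image_comp, h1]

theorem cyl_congr (a b : ℕ → Bool) (n : ℕ) (h : ∀ i < n, a i = b i) :
    cyl ψ B a n = cyl ψ B b n := by
  unfold cyl
  have : (fun i : Fin n => a i.val) = (fun i : Fin n => b i.val) :=
    funext fun i => h i i.isLt
  rw [this]

variable (hinv : ∀ b : Bool, ψ b '' B ⊆ B)

include hinv in
theorem cyl_antitone (a : ℕ → Bool) (n : ℕ) : cyl ψ B a (n + 1) ⊆ cyl ψ B a n := by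
  induction n generalizing a with
  | zero => rw [cyl_succ, cyl_zero, cyl_zero]; exact hinv (a 0)
  | succ n ih =>
      rw [cyl_succ, cyl_succ _ _ a n]
      exact Set.image_mono (ih (fun i => a (i + 1)))

variable (hθ0 : 0 ≤ θ)
    (hLip : ∀ b : Bool, ∀ p q : E2, ‖ψ b p - ψ b q‖ ≤ θ * ‖p - q‖)

include hθ0 hLip in
theorem cyl_diam (hBd : ∀ p ∈ B, ∀ q ∈ B, ‖p - q‖ ≤ Metric.diam B)
    (a : ℕ → Bool) (n : ℕ) :
    ∀ p ∈ cyl ψ B a n, ∀ q ∈ cyl ψ B a n, ‖p - q‖ ≤ θ ^ n * Metric.diam B := by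
  induction n generalizing a with
  | zero => simpa [cyl_zero] using hBd
  | succ n ih =>
      intro p hp q hq
      rw [cyl_succ] at hp hq
      obtain ⟨p', hp', rfl⟩ := hp
      obtain ⟨q', hq', rfl⟩ := hq
      calc ‖ψ (a 0) p' - ψ (a 0) q'‖ ≤ θ * ‖p' - q'‖ := hLip _ _ _
        _ ≤ θ * (θ ^ n * Metric.diam B) := by
              exact mul_le_mul_of_nonneg_left (ih _ _ hp' _ hq') hθ0
        _ = θ ^ (n + 1) * Metric.diam B := by ring

include hθ0 hLip in
theorem cyl_isCompact (hB : IsCompact B) (a : ℕ → Bool) (n : ℕ) :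
    IsCompact (cyl ψ B a n) := by
  have hcont : ∀ b : Bool, Continuous (ψ b) := by
    intro b
    refine (LipschitzWith.of_dist_le_mul (K := ⟨θ, hθ0⟩) ?_).continuous
    intro p q
    rw [dist_eq_norm, dist_eq_norm]
    exact hLip b p q
  induction n generalizing a with
  | zero => rw [cyl_zero]; exact hB
  | succ n ih =>
      rw [cyl_succ]
      exact (ih (fun i => a (i + 1))).image (hcont (a 0))

end aux



/-- Coding map sending an infinite binary word to a point of a Cantor set in `[0,1]`. -/
def codeFn (r : ℝ) (a : ℕ → Bool) : ℝ := ∑' i, if a i then (1 - r) * r ^ i else 0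

namespace CodeFn

variable {r : ℝ} (hr0 : 0 < r) (hr1 : r < 1 / 2)

include hr0 hr1

theorem term_nonneg (i : ℕ) : (0:ℝ) ≤ (1 - r) * r ^ i :=
  mul_nonneg (by linarith) (pow_nonneg hr0.le i)

theorem g_nonneg (a : ℕ → Bool) (i : ℕ) :
    (0:ℝ) ≤ if a i then (1 - r) * r ^ i else 0 := by
  split
  · exact term_nonneg hr0 hr1 i
  · exact le_refl 0

theorem g_le (a : ℕ → Bool) (i : ℕ) :
    (if a i then (1 - r) * r ^ i else 0) ≤ (1 - r) * r ^ i := by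
  split
  · exact le_refl _
  · exact term_nonneg hr0 hr1 i

theorem geom_summable : Summable (fun i : ℕ => (1 - r) * r ^ i) :=
  (summable_geometric_of_lt_one hr0.le (by linarith)).mul_left _

theorem g_summable (a : ℕ → Bool) :
    Summable (fun i => if a i then (1 - r) * r ^ i else 0) :=
  Summable.of_nonneg_of_le (g_nonneg hr0 hr1 a) (g_le hr0 hr1 a) (geom_summable hr0 hr1)

theorem mem_Icc (a : ℕ → Bool) : codeFn r a ∈ Set.Icc (0:ℝ) 1 := by
  constructor
  · exact tsum_nonneg (g_nonneg hr0 hr1 a)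
  · calc codeFn r a ≤ ∑' i : ℕ, (1 - r) * r ^ i :=
        Summable.tsum_le_tsum (g_le hr0 hr1 a) (g_summable hr0 hr1 a) (geom_summable hr0 hr1)
      _ = (1 - r) * (1 - r)⁻¹ := by
          rw [tsum_mul_left, tsum_geometric_of_lt_one hr0.le (by linarith)]
      _ = 1 := mul_inv_cancel₀ (by linarith)

theorem sep (a b : ℕ → Bool) (n : ℕ) (hag : ∀ i < n, a i = b i) (hne : a n ≠ b n) :
    (1 - 2 * r) * r ^ n ≤ |codeFn r a - codeFn r b| := by
  have hterm := term_nonneg hr0 hr1 (r := r)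
  obtain ⟨f, hf⟩ : ∃ f : ℕ → ℝ, f =
      fun i => (if a i then (1 - r) * r ^ i else 0) - (if b i then (1 - r) * r ^ i else 0) :=
    ⟨_, rfl⟩
  have hfs : Summable f := by
    rw [hf]; exact (g_summable hr0 hr1 a).sub (g_summable hr0 hr1 b)
  have hf0 : ∀ i < n, f i = 0 := by
    intro i hi; rw [hf]; dsimp only; rw [hag i hi, sub_self]
  have hfn : |f n| = (1 - r) * r ^ n := by
    rw [hf]; dsimp only
    cases ha : a n <;> cases hb : b n
    · exact absurd (ha.trans hb.symm) hne
    · simp only [ha, hb, if_pos rfl, if_neg (by simp : ¬(false = true)), zero_sub, abs_neg]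
      exact abs_of_nonneg (hterm n)
    · simp only [ha, hb, if_pos rfl, if_neg (by simp : ¬(false = true)), sub_zero]
      exact abs_of_nonneg (hterm n)
    · exact absurd (ha.trans hb.symm) hne
  have hfb : ∀ i, |f i| ≤ (1 - r) * r ^ i := by
    intro i
    have h1 := g_nonneg hr0 hr1 a i
    have h2 := g_nonneg hr0 hr1 b i
    have h3 := g_le hr0 hr1 a i
    have h4 := g_le hr0 hr1 b i
    rw [hf]; dsimp only; rw [abs_sub_le_iff]; constructor <;> linarith
  have hsplit : codeFn r a - codeFn r b = ∑' i, f i := by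
    rw [hf]; exact (Summable.tsum_sub (g_summable hr0 hr1 a) (g_summable hr0 hr1 b)).symm
  have hsum : (∑ i ∈ Finset.range (n + 1), f i) + ∑' i, f (i + (n + 1)) = ∑' i, f i :=
    Summable.sum_add_tsum_nat_add (f := f) (n + 1) hfs
  have hhead : (∑ i ∈ Finset.range (n + 1), f i) = f n := by
    rw [Finset.sum_range_succ,
      Finset.sum_eq_zero (fun i hi => hf0 i (Finset.mem_range.mp hi)), zero_add]
  have habs : Summable (fun i => |f i|) :=
    Summable.of_nonneg_of_le (fun i => abs_nonneg _) hfb (geom_summable hr0 hr1)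
  have habs' : Summable (fun i => |f (i + (n + 1))|) :=
    (summable_nat_add_iff (f := fun i => |f i|) (n + 1)).mpr habs
  have hgeom' : Summable (fun i : ℕ => (1 - r) * r ^ (i + (n + 1))) :=
    (summable_nat_add_iff (f := fun i : ℕ => (1 - r) * r ^ i) (n + 1)).mpr
      (geom_summable hr0 hr1)
  have htail : |∑' i, f (i + (n + 1))| ≤ r ^ (n + 1) := by
    have h1 : |∑' i, f (i + (n + 1))| ≤ ∑' i, |f (i + (n + 1))| := by
      have h := norm_tsum_le_tsum_norm (f := fun i => f (i + (n + 1)))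
        (by simpa [Real.norm_eq_abs] using habs')
      simpa [Real.norm_eq_abs] using h
    have h2 : ∑' i, |f (i + (n + 1))| ≤ ∑' i : ℕ, (1 - r) * r ^ (i + (n + 1)) :=
      Summable.tsum_le_tsum (fun i => hfb _) habs' hgeom'
    have h3 : ∑' i : ℕ, (1 - r) * r ^ (i + (n + 1)) = r ^ (n + 1) := by
      have he : ∀ i : ℕ, (1 - r) * r ^ (i + (n + 1)) = ((1 - r) * r ^ (n + 1)) * r ^ i := by
        intro i; rw [pow_add]; ring
      rw [tsum_congr he, tsum_mul_left, tsum_geometric_of_lt_one hr0.le (by linarith)]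
      rw [mul_comm (1 - r), mul_assoc, mul_inv_cancel₀ (by linarith : (1:ℝ) - r ≠ 0), mul_one]
    linarith
  have hS : codeFn r a - codeFn r b = f n + ∑' i, f (i + (n + 1)) := by
    rw [hsplit, ← hsum, hhead]
  have key : (1 - r) * r ^ n ≤
      |f n + ∑' i, f (i + (n + 1))| + |∑' i, f (i + (n + 1))| := by
    rw [← hfn]
    have h := abs_add_le (f n + ∑' i, f (i + (n + 1))) (-(∑' i, f (i + (n + 1))))
    simpa using h
  rw [hS]
  have hring : (1 - 2 * r) * r ^ n + r ^ (n + 1) = (1 - r) * r ^ n := by ring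
  linarith

theorem injective : Function.Injective (codeFn r) := by
  intro a b hab
  by_contra hne
  have hex : ∃ n, a n ≠ b n := by
    by_contra h
    push_neg at h
    exact hne (funext h)
  have h1 := sep hr0 hr1 a b (Nat.find hex)
    (fun i hi => by simpa using Nat.find_min hex (m := i) hi) (Nat.find_spec hex)
  rw [hab, sub_self, abs_zero] at h1
  nlinarith [pow_pos hr0 (Nat.find hex)]

end CodeFn

set_option maxHeartbeats 1000000 in
/-- If `ψ₀, ψ₁ : ℝ² → ℝ²` are Lipschitz with constant `θ < 1/2` and map a nonempty
compact set `B` into itself, then the attractor `⋂_{n≥1} ⋃_{w ∈ {0,1}ⁿ} ψ_w(B)` is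
contained in the image of a Lipschitz curve `γ : [0,1] → ℝ²`. -/
theorem lipschitz_curve_through_attractor
    (θ : ℝ) (hθ : θ ∈ Set.Ico (0 : ℝ) (1 / 2))
    (ψ : Bool → E2 → E2)
    (hLip : ∀ b : Bool, ∀ p q : E2, ‖ψ b p - ψ b q‖ ≤ θ * ‖p - q‖)
    (B : Set E2) (hBne : B.Nonempty) (hBcpt : IsCompact B)
    (hinv : ∀ b : Bool, ψ b '' B ⊆ B) :
    ∃ (L : ℝ) (γ : ℝ → E2), 0 ≤ L ∧
      (∀ s ∈ Set.Icc (0 : ℝ) 1, ∀ t ∈ Set.Icc (0 : ℝ) 1, ‖γ s - γ t‖ ≤ L * |s - t|) ∧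
      (⋂ (n : ℕ) (_ : 1 ≤ n), ⋃ w : Fin n → Bool, wordComp ψ n w '' B) ⊆
        γ '' Set.Icc 0 1 := by
  classical
  obtain ⟨hθ0, hθhalf⟩ := hθ
  have hD0 : 0 ≤ Metric.diam B := Metric.diam_nonneg
  have hBd : ∀ p ∈ B, ∀ q ∈ B, ‖p - q‖ ≤ Metric.diam B := by
    intro p hp q hq
    rw [← dist_eq_norm]
    exact Metric.dist_le_diam_of_mem hBcpt.isBounded hp hq
  -- choose a point in each infinite intersection of cylinders
  have hne : ∀ a : ℕ → Bool, (⋂ n, cyl ψ B a n).Nonempty := by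
    intro a
    exact IsCompact.nonempty_iInter_of_sequence_nonempty_isCompact_isClosed _
      (fun n => cyl_antitone ψ B hinv a n) (fun n => hBne.image _)
      (cyl_isCompact θ ψ B hθ0 hLip hBcpt a 0)
      (fun n => (cyl_isCompact θ ψ B hθ0 hLip hBcpt a n).isClosed)
  choose x hx using hne
  have hxmem : ∀ a n, x a ∈ cyl ψ B a n := fun a n => Set.mem_iInter.mp (hx a) n
  -- ratio for the coding map
  obtain ⟨r, hr0, hrhalf, hθr⟩ : ∃ r : ℝ, 0 < r ∧ r < 1 / 2 ∧ θ ≤ r :=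
    ⟨(2 * θ + 1) / 4, by linarith, by linarith, by linarith⟩
  have hgap : 0 < 1 - 2 * r := by linarith
  have hπinj : Function.Injective (codeFn r) := CodeFn.injective hr0 hrhalf
  -- the curve on the Cantor set
  obtain ⟨γ₀, hγ₀⟩ : ∃ γ₀ : ℝ → E2, ∀ a, γ₀ (codeFn r a) = x a := by
    refine ⟨fun t => if h : ∃ a, codeFn r a = t then x h.choose else 0, fun a => ?_⟩
    have h : ∃ b, codeFn r b = codeFn r a := ⟨a, rfl⟩
    simp only [dif_pos h]
    exact congrArg x (hπinj h.choose_spec)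
  obtain ⟨L₀, hL₀0, hL₀def⟩ : ∃ L₀ : ℝ, 0 ≤ L₀ ∧ L₀ = Metric.diam B / (1 - 2 * r) :=
    ⟨_, div_nonneg hD0 hgap.le, rfl⟩
  have hxLip : ∀ a b : ℕ → Bool, ‖x a - x b‖ ≤ L₀ * |codeFn r a - codeFn r b| := by
    intro a b
    rcases eq_or_ne a b with rfl | hab
    · simp [mul_nonneg hL₀0 (abs_nonneg _)]
    have hex : ∃ n, a n ≠ b n := by
      by_contra h
      push_neg at h
      exact hab (funext h)
    have hag : ∀ i < Nat.find hex, a i = b i := fun i hi => by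
      simpa using Nat.find_min hex (m := i) hi
    have hsep' := CodeFn.sep hr0 hrhalf a b (Nat.find hex) hag (Nat.find_spec hex)
    have hxa : x a ∈ cyl ψ B a (Nat.find hex) := hxmem a _
    have hxb : x b ∈ cyl ψ B a (Nat.find hex) := by
      rw [cyl_congr ψ B a b _ hag]; exact hxmem b _
    have hdiam := cyl_diam θ ψ B hθ0 hLip hBd a (Nat.find hex) (x a) hxa (x b) hxb
    have hpow : θ ^ Nat.find hex ≤ r ^ Nat.find hex := pow_le_pow_left₀ hθ0 hθr _
    calc ‖x a - x b‖ ≤ θ ^ Nat.find hex * Metric.diam B := hdiam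
      _ ≤ r ^ Nat.find hex * Metric.diam B := mul_le_mul_of_nonneg_right hpow hD0
      _ ≤ (|codeFn r a - codeFn r b| / (1 - 2 * r)) * Metric.diam B := by
          apply mul_le_mul_of_nonneg_right _ hD0
          rw [le_div_iff₀ hgap]
          calc r ^ Nat.find hex * (1 - 2 * r)
              = (1 - 2 * r) * r ^ Nat.find hex := by ring
            _ ≤ |codeFn r a - codeFn r b| := hsep'
      _ = L₀ * |codeFn r a - codeFn r b| := by rw [hL₀def]; ring
  -- coordinatewise Lipschitz extension
  have hcoord : ∀ (v : E2) (i : Fin 2), |v i| ≤ ‖v‖ := by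
    intro v i
    rw [EuclideanSpace.norm_eq]
    have h1 : |v i| = Real.sqrt (‖v i‖ ^ 2) := by
      rw [Real.sqrt_sq_eq_abs, Real.norm_eq_abs, abs_abs]
    rw [h1]
    apply Real.sqrt_le_sqrt
    exact Finset.single_le_sum (f := fun j => ‖v j‖ ^ 2)
      (fun j _ => by positivity) (Finset.mem_univ i)
  have hLipOn : ∀ i : Fin 2,
      LipschitzOnWith ⟨L₀, hL₀0⟩ (fun t => γ₀ t i) (Set.range (codeFn r)) := by
    intro i
    apply LipschitzOnWith.of_dist_le_mul
    rintro s ⟨a, rfl⟩ t ⟨b, rfl⟩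
    rw [Real.dist_eq, Real.dist_eq]
    calc |γ₀ (codeFn r a) i - γ₀ (codeFn r b) i|
        = |(γ₀ (codeFn r a) - γ₀ (codeFn r b)) i| := by
          rw [PiLp.sub_apply]
      _ ≤ ‖γ₀ (codeFn r a) - γ₀ (codeFn r b)‖ := hcoord _ i
      _ = ‖x a - x b‖ := by rw [hγ₀, hγ₀]
      _ ≤ L₀ * |codeFn r a - codeFn r b| := hxLip a b
  have hext : ∀ i : Fin 2, ∃ G : ℝ → ℝ, LipschitzWith ⟨L₀, hL₀0⟩ G ∧
      Set.EqOn (fun t => γ₀ t i) G (Set.range (codeFn r)) :=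
    fun i => (hLipOn i).extend_real
  choose G hGLip hGEq using hext
  refine ⟨2 * L₀, fun t => (WithLp.equiv 2 (Fin 2 → ℝ)).symm (fun i => G i t),
    by positivity, ?_, ?_⟩
  · -- Lipschitz estimate for γ
    intro s _ t _
    have hGi : ∀ i : Fin 2, |G i s - G i t| ≤ L₀ * |s - t| := by
      intro i
      have h := (hGLip i).dist_le_mul s t
      rw [Real.dist_eq, Real.dist_eq] at h
      exact h
    rw [show ((WithLp.equiv 2 (Fin 2 → ℝ)).symm (fun i => G i s) -
        (WithLp.equiv 2 (Fin 2 → ℝ)).symm (fun i => G i t) : E2)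
        = (WithLp.equiv 2 (Fin 2 → ℝ)).symm (fun i => G i s - G i t) from rfl]
    rw [EuclideanSpace.norm_eq]
    have h2 : ∑ i : Fin 2,
        ‖((WithLp.equiv 2 (Fin 2 → ℝ)).symm (fun i => G i s - G i t) : E2) i‖ ^ 2
        ≤ (2 * L₀ * |s - t|) ^ 2 := by
      rw [Fin.sum_univ_two]
      have e0 := hGi 0
      have e1 := hGi 1
      have n0 : ‖((WithLp.equiv 2 (Fin 2 → ℝ)).symm (fun i => G i s - G i t) : E2) 0‖
          = |G 0 s - G 0 t| := Real.norm_eq_abs _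
      have n1 : ‖((WithLp.equiv 2 (Fin 2 → ℝ)).symm (fun i => G i s - G i t) : E2) 1‖
          = |G 1 s - G 1 t| := Real.norm_eq_abs _
      rw [n0, n1]
      nlinarith [abs_nonneg (G 0 s - G 0 t), abs_nonneg (G 1 s - G 1 t),
        abs_nonneg (s - t), mul_nonneg hL₀0 (abs_nonneg (s - t))]
    calc Real.sqrt (∑ i : Fin 2,
          ‖((WithLp.equiv 2 (Fin 2 → ℝ)).symm (fun i => G i s - G i t) : E2) i‖ ^ 2)
        ≤ Real.sqrt ((2 * L₀ * |s - t|) ^ 2) := Real.sqrt_le_sqrt h2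
      _ = 2 * L₀ * |s - t| := Real.sqrt_sq (by positivity)
  · -- the attractor is covered
    intro p hp
    simp only [Set.mem_iInter] at hp
    have hpB : p ∈ B := by
      have h1 := hp 1 le_rfl
      obtain ⟨w, hw⟩ := Set.mem_iUnion.mp h1
      have h2 : wordComp ψ 1 w '' B ⊆ B := by
        show (ψ (w 0) ∘ wordComp ψ 0 (fun i => w i.succ)) '' B ⊆ B
        rw [Set.image_comp, show wordComp ψ 0 (fun i => w i.succ) = id from rfl,
          Set.image_id]
        exact hinv (w 0)
      exact h2 hw
    -- find an infinite word a with p ∈ cyl ψ B a n for all n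
    have hKclosed : ∀ n : ℕ, IsClosed {a : ℕ → Bool | p ∈ cyl ψ B a n} := by
      intro n
      have hrw : {a : ℕ → Bool | p ∈ cyl ψ B a n}
          = (fun a : ℕ → Bool => (fun i : Fin n => a i.val)) ⁻¹'
            {w : Fin n → Bool | p ∈ wordComp ψ n w '' B} := rfl
      rw [hrw]
      exact (isClosed_discrete _).preimage (continuous_pi (fun i => continuous_apply i.val))
    have hKne : ∀ n : ℕ, {a : ℕ → Bool | p ∈ cyl ψ B a n}.Nonempty := by
      intro n
      rcases Nat.eq_zero_or_pos n with rfl | hn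
      · exact ⟨fun _ => false, by simpa [cyl_zero] using hpB⟩
      obtain ⟨w, hw⟩ := Set.mem_iUnion.mp (hp n hn)
      refine ⟨fun i => if h : i < n then w ⟨i, h⟩ else false, ?_⟩
      show p ∈ cyl ψ B (fun i => if h : i < n then w ⟨i, h⟩ else false) n
      unfold cyl
      have hww : (fun i : Fin n =>
          (fun j => if h : j < n then w ⟨j, h⟩ else false) i.val) = w := by
        funext i
        simp [i.isLt]
      rw [hww]
      exact hw
    have hKint : (⋂ n, {a : ℕ → Bool | p ∈ cyl ψ B a n}).Nonempty := by
      refine IsCompact.nonempty_iInter_of_sequence_nonempty_isCompact_isClosed _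
        (fun n a ha => cyl_antitone ψ B hinv a n ha) hKne ?_ (hKclosed)
      exact (hKclosed 0).isCompact
    obtain ⟨a, ha⟩ := hKint
    have hpa : ∀ n, p ∈ cyl ψ B a n := fun n => Set.mem_iInter.mp ha n
    -- p = x a
    have hpx : p = x a := by
      have hb : ∀ n, ‖p - x a‖ ≤ θ ^ n * Metric.diam B := fun n =>
        cyl_diam θ ψ B hθ0 hLip hBd a n p (hpa n) (x a) (hxmem a n)
      have htend : Filter.Tendsto (fun n : ℕ => θ ^ n * Metric.diam B)
          Filter.atTop (nhds 0) := by
        have h := tendsto_pow_atTop_nhds_zero_of_lt_one hθ0 (by linarith : θ < 1)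
        simpa using h.mul_const (Metric.diam B)
      have h0 : ‖p - x a‖ ≤ 0 := ge_of_tendsto' htend hb
      have h1 := le_antisymm h0 (norm_nonneg _)
      rw [← sub_eq_zero]
      exact norm_eq_zero.mp h1
    refine ⟨codeFn r a, CodeFn.mem_Icc hr0 hrhalf a, ?_⟩
    have hfin : ((WithLp.equiv 2 (Fin 2 → ℝ)).symm
        (fun i => G i (codeFn r a)) : E2) = γ₀ (codeFn r a) := by
      apply PiLp.ext
      intro i
      exact (hGEq i ⟨a, rfl⟩).symm
    show ((WithLp.equiv 2 (Fin 2 → ℝ)).symm fun i => G i (codeFn r a)) = p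
    rw [hfin, hγ₀, hpx]
end
end

section
/- Let θ ∈ [0, 1/2) and for each n ≥ 1 let ψ₀ⁿ, ψ₁ⁿ : ℝ² → ℝ² be Lipschitz maps such that there exists N with: for every n ≥ N, both ψ₀ⁿ and ψ₁ⁿ are Lipschitz with constant θ. Let B ⊆ ℝ² be a nonempty compact set with ψ₀ⁿ(B) ⊆ B and ψ₁ⁿ(B) ⊆ B for all n. Then there exist L ≥ 0 and a curve γ : [0,1] → ℝ² that is Lipschitz with constant L such that the set A = ⋂_{n≥1} ⋃_{w ∈ {0,1}ⁿ} Bⁿ_w is contained in the image γ([0,1]). -/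
/-!
Fix `r ∈ [θ, 1/2)`, `r > 0`. The word maps of length `n` are `C rⁿ`-Lipschitz, so each infinite
address `W` determines a point `x W` of the nested cylinders `Bⁿ_{W|n}`, and `x W`, `x W'` are at
distance `≤ C · diam B · rᵏ` when `W`, `W'` first differ at `k`. In the Cantor set of ratio `r`
in `[0, 1]` the corresponding points are at distance `≥ (1 - 2r) rᵏ`, so `x` is a Lipschitz
function of the Cantor parameter; extend it to a Lipschitz curve on `ℝ`. Every point of the
attractor is a limit of points `x W`, hence lies on the (closed) image of `[0, 1]`.
-/
noncomputable section

/-- For a word `w = (w₁, …, wₙ) ∈ {0,1}ⁿ` and a family of maps `ψᵏᵢ` depending on the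
level `k`, the composition `ψⁿ_w = ψ¹_{w₁} ∘ ψ²_{w₂} ∘ ⋯ ∘ ψⁿ_{wₙ}`, where the first
map used is taken at level `k`. -/
def wordCompNA (ψ : ℕ → Bool → E2 → E2) : (k : ℕ) → (n : ℕ) → (Fin n → Bool) → E2 → E2
  | _, 0, _ => id
  | k, n + 1, w => ψ k (w 0) ∘ wordCompNA ψ (k + 1) n (fun i => w i.succ)

open Set Function Filter Topology NNReal

section WordMaps

variable (ψ : ℕ → Bool → E2 → E2)

theorem wordCompNA_succ_right (n k : ℕ) (w : Fin (n + 1) → Bool) :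
    wordCompNA ψ k (n + 1) w =
      wordCompNA ψ k n (fun i => w i.castSucc) ∘ ψ (k + n) (w (Fin.last n)) := by
  induction n generalizing k with
  | zero => rfl
  | succ n ih =>
    rw [wordCompNA, ih (k + 1), Nat.add_right_comm k 1 n]
    rfl

theorem lipschitzWith_wordCompNA {c : ℕ → ℝ≥0} (hψ : ∀ j b, LipschitzWith (c j) (ψ j b))
    (n k : ℕ) (w : Fin n → Bool) :
    LipschitzWith (∏ i ∈ Finset.range n, c (k + i)) (wordCompNA ψ k n w) := by
  induction n generalizing k with
  | zero => exact LipschitzWith.id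
  | succ n ih =>
    have hshift : ∀ i, k + (i + 1) = k + 1 + i := fun i => by omega
    rw [Finset.prod_range_succ', add_zero, mul_comm,
      Finset.prod_congr rfl fun i _ => congrArg c (hshift i)]
    exact (hψ k (w 0)).comp (ih (k + 1) _)

end WordMaps

theorem exists_lipschitzWith_eventually_le {α β : Type*} [PseudoEMetricSpace α]
    [PseudoEMetricSpace β] {f : ℕ → Bool → α → β} {r : ℝ≥0} {N : ℕ}
    (hf : ∀ j b, ∃ K, LipschitzWith K (f j b)) (hN : ∀ j ≥ N, ∀ b, LipschitzWith r (f j b)) :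
    ∃ c : ℕ → ℝ≥0, (∀ j ≥ N, c j ≤ r) ∧ ∀ j b, LipschitzWith (c j) (f j b) := by
  choose K hK using hf
  refine ⟨fun j => if N ≤ j then r else K j false ⊔ K j true, fun j hj => by simp [hj],
    fun j b => ?_⟩
  dsimp only
  split_ifs with hj
  · exact hN j hj b
  · exact (hK j b).weaken (by cases b <;> simp)

theorem NNReal.exists_prod_range_le_mul_pow {c : ℕ → ℝ≥0} {r : ℝ≥0} {N : ℕ} (hr : 0 < r)
    (hc : ∀ j ≥ N, c j ≤ r) : ∃ C : ℝ≥0, ∀ n, ∏ i ∈ Finset.range n, c i ≤ C * r ^ n := by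
  set m : ℕ → ℝ≥0 := fun i => max (c i / r) 1
  have hcm : ∀ i, c i ≤ r * m i := fun i => by
    rw [← div_le_iff₀' hr]; exact le_max_left _ _
  have hm : ∀ i, m i ≠ 1 → i < N := fun i hi => by
    by_contra! hiN
    exact hi (max_eq_right ((div_le_one hr).2 (hc i hiN)))
  refine ⟨∏ i ∈ Finset.range N, m i, fun n => ?_⟩
  calc ∏ i ∈ Finset.range n, c i ≤ ∏ i ∈ Finset.range n, r * m i :=
        Finset.prod_le_prod' fun i _ => hcm i
    _ = r ^ n * ∏ i ∈ Finset.range n, m i := by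
      rw [Finset.prod_mul_distrib, Finset.prod_const, Finset.card_range]
    _ = r ^ n * ∏ i ∈ Finset.range n with i < N, m i := by
      rw [Finset.prod_filter_of_ne fun i _ => hm i]
    _ ≤ r ^ n * ∏ i ∈ Finset.range N, m i := by
      gcongr 1
      refine Finset.prod_le_prod_of_subset_of_one_le' (fun i hi => ?_)
        fun i _ _ => le_max_right _ _
      simp only [Finset.mem_filter, Finset.mem_range] at hi ⊢
      exact hi.2
    _ = _ := mul_comm _ _

section Coding

variable (ψ : ℕ → Bool → E2 → E2) (k : ℕ) (B : Set E2)

/-- The cylinder `Bⁿ_w` for the prefix `w` of length `n` of an infinite address `W`. -/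
def prefixImage (W : ℕ → Bool) (n : ℕ) : Set E2 :=
  wordCompNA ψ k n (fun i : Fin n => W i) '' B

variable {ψ k B}

theorem prefixImage_succ_subset (hB : ∀ j b, MapsTo (ψ j b) B B) (W : ℕ → Bool) (n : ℕ) :
    prefixImage ψ k B W (n + 1) ⊆ prefixImage ψ k B W n := by
  rw [prefixImage, wordCompNA_succ_right, image_comp]
  exact image_mono (hB _ _).image_subset

theorem prefixImage_congr {W W' : ℕ → Bool} {n : ℕ} (h : ∀ i < n, W i = W' i) :
    prefixImage ψ k B W n = prefixImage ψ k B W' n := by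
  simp only [prefixImage, funext fun i : Fin n => h i i.2]

variable {C r : ℝ≥0}

theorem dist_le_of_mem_prefixImage
    (hC : ∀ n w, LipschitzWith (C * r ^ n) (wordCompNA ψ k n w)) (hBb : Bornology.IsBounded B)
    {W : ℕ → Bool} {n : ℕ} {p q : E2} (hp : p ∈ prefixImage ψ k B W n)
    (hq : q ∈ prefixImage ψ k B W n) : dist p q ≤ C * Metric.diam B * r ^ n := by
  obtain ⟨u, hu, rfl⟩ := hp
  obtain ⟨v, hv, rfl⟩ := hq
  calc _ ≤ (C * r ^ n : ℝ≥0) * dist u v := (hC n _).dist_le_mul u v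
    _ ≤ (C * r ^ n : ℝ≥0) * Metric.diam B := by
      gcongr; exact Metric.dist_le_diam_of_mem hBb hu hv
    _ = _ := by push_cast; ring

theorem nonempty_iInter_prefixImage
    (hC : ∀ n w, LipschitzWith (C * r ^ n) (wordCompNA ψ k n w)) (hBc : IsCompact B)
    (hBn : B.Nonempty) (hB : ∀ j b, MapsTo (ψ j b) B B) (W : ℕ → Bool) :
    (⋂ n, prefixImage ψ k B W n).Nonempty :=
  IsCompact.nonempty_iInter_of_sequence_nonempty_isCompact_isClosed _
    (prefixImage_succ_subset hB W) (fun _ => hBn.image _) (hBc.image (hC 0 _).continuous)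
    fun n => (hBc.image (hC n _).continuous).isClosed

theorem exists_coding_of_lipschitzWith_wordCompNA
    (hC : ∀ n w, LipschitzWith (C * r ^ n) (wordCompNA ψ k n w)) (hr : r < 1)
    (hBc : IsCompact B) (hBn : B.Nonempty) (hB : ∀ j b, MapsTo (ψ j b) B B) :
    ∃ x : (ℕ → Bool) → E2,
      (∀ W W', W ≠ W' → dist (x W) (x W') ≤ C * Metric.diam B * r ^ PiNat.firstDiff W W') ∧
      (⋂ (n : ℕ) (_ : 1 ≤ n), ⋃ w : Fin n → Bool, wordCompNA ψ k n w '' B) ⊆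
        closure (range x) := by
  choose x hx using nonempty_iInter_prefixImage hC hBc hBn hB
  have hxn : ∀ W n, x W ∈ prefixImage ψ k B W n := fun W => mem_iInter.1 (hx W)
  refine ⟨x, fun W W' h => ?_, fun a ha => Metric.mem_closure_iff.2 fun ε hε => ?_⟩
  · refine dist_le_of_mem_prefixImage hC hBc.isBounded (hxn W _) ?_
    rw [prefixImage_congr fun i hi => PiNat.apply_eq_of_lt_firstDiff hi]
    exact hxn W' _
  · have hlim : Tendsto (fun n => C * Metric.diam B * (r : ℝ) ^ n) atTop (𝓝 0) := by
      simpa using (tendsto_pow_atTop_nhds_zero_of_lt_one r.2 hr).const_mul _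
    obtain ⟨n, hnε, hn⟩ := ((hlim.eventually (gt_mem_nhds hε)).and (eventually_ge_atTop 1)).exists
    obtain ⟨w, b, hb, rfl⟩ := mem_iUnion.1 (mem_iInter₂.1 ha n hn)
    have hw : prefixImage ψ k B (fun i => if h : i < n then w ⟨i, h⟩ else false) n =
        wordCompNA ψ k n w '' B := by
      simp [prefixImage]
    exact ⟨_, mem_range_self _, (dist_le_of_mem_prefixImage hC hBc.isBounded
      (hw ▸ mem_image_of_mem _ hb) (hxn _ n)).trans_lt hnε⟩

end Coding

section CantorParam

variable {r : ℝ}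

theorem hasSum_one_sub_mul_geometric (hr0 : 0 ≤ r) (hr1 : r < 1) :
    HasSum (fun i : ℕ => (1 - r) * r ^ i) 1 := by
  simpa [mul_inv_cancel₀ (sub_ne_zero.2 hr1.ne')] using
    (hasSum_geometric_of_lt_one hr0 hr1).mul_left (1 - r)

theorem le_abs_tsum_of_leading_term (hr0 : 0 ≤ r) (hr1 : r < 1) {e : ℕ → ℝ} {k : ℕ}
    (he : ∀ i, |e i| ≤ (1 - r) * r ^ i) (hzero : ∀ i < k, e i = 0)
    (hk : |e k| = (1 - r) * r ^ k) : (1 - 2 * r) * r ^ k ≤ |∑' i, e i| := by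
  have hgeom := hasSum_one_sub_mul_geometric hr0 hr1
  have hsplit : ∑' i, e i = e k + ∑' i, e (i + (k + 1)) := by
    rw [← (hgeom.summable.of_norm_bounded (f := e) he).sum_add_tsum_nat_add (k + 1),
      Finset.sum_range_succ, Finset.sum_eq_zero fun i hi => hzero i (Finset.mem_range.1 hi),
      zero_add]
  have htail : |∑' i, e (i + (k + 1))| ≤ r ^ (k + 1) := by
    rw [← Real.norm_eq_abs]
    refine tsum_of_norm_bounded (g := fun i => r ^ (k + 1) * ((1 - r) * r ^ i))
      (by simpa using hgeom.mul_left (r ^ (k + 1))) fun i => ?_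
    calc ‖e (i + (k + 1))‖ ≤ (1 - r) * r ^ (i + (k + 1)) := he _
      _ = r ^ (k + 1) * ((1 - r) * r ^ i) := by ring
  have := abs_sub (e k + ∑' i, e (i + (k + 1))) (∑' i, e (i + (k + 1)))
  rw [add_sub_cancel_right, hk, ← hsplit] at this
  nlinarith [pow_succ r k]

/-- The point with address `W` of the Cantor set of ratio `r` in `[0, 1]`: digit `i` chooses
between the two subintervals of length `r ^ (i + 1)`, which are separated by a gap
`(1 - 2 * r) * r ^ i`. -/
def cantorParam (r : ℝ) (W : ℕ → Bool) : ℝ :=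
  ∑' i, if W i then (1 - r) * r ^ i else 0

theorem cantorParam_term_mem_Icc (hr0 : 0 ≤ r) (hr1 : r < 1) (b : Bool) (i : ℕ) :
    (if b then (1 - r) * r ^ i else 0) ∈ Icc 0 ((1 - r) * r ^ i) := by
  have : 0 ≤ (1 - r) * r ^ i := mul_nonneg (by linarith) (pow_nonneg hr0 i)
  cases b <;> simp [this]

theorem cantorParam_mem_Icc (hr0 : 0 ≤ r) (hr1 : r < 1) (W : ℕ → Bool) :
    cantorParam r W ∈ Icc 0 1 := by
  have hterm := fun i => cantorParam_term_mem_Icc hr0 hr1 (W i) i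
  have hgeom := hasSum_one_sub_mul_geometric hr0 hr1
  refine ⟨tsum_nonneg fun i => (hterm i).1, ?_⟩
  exact hasSum_le (fun i => (hterm i).2)
    ((hgeom.summable.of_nonneg_of_le (fun i => (hterm i).1) fun i => (hterm i).2).hasSum) hgeom

theorem pow_firstDiff_le_abs_cantorParam_sub (hr0 : 0 ≤ r) (hr1 : r < 1) {W W' : ℕ → Bool}
    (h : W ≠ W') :
    (1 - 2 * r) * r ^ PiNat.firstDiff W W' ≤ |cantorParam r W - cantorParam r W'| := by
  have hterm := fun (W : ℕ → Bool) i => cantorParam_term_mem_Icc hr0 hr1 (W i) i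
  have hsum := fun (W : ℕ → Bool) =>
    (hasSum_one_sub_mul_geometric hr0 hr1).summable.of_nonneg_of_le (fun i => (hterm W i).1)
      fun i => (hterm W i).2
  rw [cantorParam, cantorParam, ← (hsum W).tsum_sub (hsum W')]
  refine le_abs_tsum_of_leading_term hr0 hr1 (fun i => abs_sub_le_iff.2 ?_)
    (fun i hi => by rw [PiNat.apply_eq_of_lt_firstDiff hi, sub_self]) ?_
  · constructor <;> linarith [(hterm W i).1, (hterm W i).2, (hterm W' i).1, (hterm W' i).2]
  · have hk := PiNat.apply_firstDiff_ne h
    have : 0 ≤ (1 - r) * r ^ PiNat.firstDiff W W' := mul_nonneg (by linarith) (pow_nonneg hr0 _)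
    cases hW : W (PiNat.firstDiff W W') <;> cases hW' : W' (PiNat.firstDiff W W') <;>
      simp_all [abs_of_nonneg]

theorem dist_le_mul_dist_cantorParam {X : Type*} [PseudoMetricSpace X] (hr0 : 0 ≤ r)
    (hr2 : r < 1 / 2) {A : ℝ} (hA : 0 ≤ A) {x : (ℕ → Bool) → X}
    (hx : ∀ W W', W ≠ W' → dist (x W) (x W') ≤ A * r ^ PiNat.firstDiff W W') (W W' : ℕ → Bool) :
    dist (x W) (x W') ≤ A / (1 - 2 * r) * dist (cantorParam r W) (cantorParam r W') := by
  rcases eq_or_ne W W' with rfl | h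
  · simp
  rw [Real.dist_eq, div_mul_eq_mul_div, le_div_iff₀ (by linarith)]
  calc dist (x W) (x W') * (1 - 2 * r) ≤ A * r ^ PiNat.firstDiff W W' * (1 - 2 * r) := by
        gcongr
        · linarith
        · exact hx W W' h
    _ ≤ A * |cantorParam r W - cantorParam r W'| := by
      rw [mul_assoc, mul_comm (r ^ _)]
      exact mul_le_mul_of_nonneg_left
        (pow_firstDiff_le_abs_cantorParam_sub hr0 (by linarith) h) hA

end CantorParam

theorem exists_lipschitzWith_comp_eq {α E : Type*} [NormedAddCommGroup E] [NormedSpace ℝ E]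
    [FiniteDimensional ℝ E] {t : α → ℝ} {x : α → E} {K : ℝ}
    (h : ∀ a b, dist (x a) (x b) ≤ K * dist (t a) (t b)) :
    ∃ (K' : ℝ≥0) (γ : ℝ → E), LipschitzWith K' γ ∧ γ ∘ t = x := by
  have hfac : x.FactorsThrough t := fun a b hab =>
    dist_le_zero.1 (by simpa [hab] using h a b)
  have hlip : LipschitzOnWith K.toNNReal (extend t x 0) (range t) := by
    refine LipschitzOnWith.of_dist_le' ?_
    rintro _ ⟨a, rfl⟩ _ ⟨b, rfl⟩
    simpa only [hfac.extend_apply] using h a b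
  obtain ⟨γ, hγ, hγt⟩ := hlip.extend_finite_dimension
  exact ⟨_, γ, hγ, funext fun a => (hγt (mem_range_self a)).symm.trans (hfac.extend_apply 0 a)⟩

/-- If `ψ₀ⁿ, ψ₁ⁿ : ℝ² → ℝ²` (for `n ≥ 1`) are Lipschitz maps, all of which are Lipschitz
with constant `θ < 1/2` from some level `N` on, and all of which map a nonempty compact
set `B` into itself, then the set `⋂_{n≥1} ⋃_{w ∈ {0,1}ⁿ} Bⁿ_w`, where
`Bⁿ_w = ψ¹_{w₁} ∘ ⋯ ∘ ψⁿ_{wₙ}(B)`, is contained in the image of a Lipschitz curve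
`γ : [0,1] → ℝ²`. -/
theorem lipschitz_curve_through_attractor_nonautonomous
    (θ : ℝ) (hθ : θ ∈ Set.Ico (0 : ℝ) (1 / 2))
    (ψ : ℕ → Bool → E2 → E2)
    (hLipAll : ∀ n : ℕ, ∀ b : Bool, ∃ K : ℝ, 0 ≤ K ∧
      ∀ p q : E2, ‖ψ n b p - ψ n b q‖ ≤ K * ‖p - q‖)
    (hLipθ : ∃ N : ℕ, ∀ n ≥ N, ∀ b : Bool,
      ∀ p q : E2, ‖ψ n b p - ψ n b q‖ ≤ θ * ‖p - q‖)
    (B : Set E2) (hBne : B.Nonempty) (hBcpt : IsCompact B)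
    (hinv : ∀ n : ℕ, ∀ b : Bool, ψ n b '' B ⊆ B) :
    ∃ (L : ℝ) (γ : ℝ → E2), 0 ≤ L ∧
      (∀ s ∈ Set.Icc (0 : ℝ) 1, ∀ t ∈ Set.Icc (0 : ℝ) 1, ‖γ s - γ t‖ ≤ L * |s - t|) ∧
      (⋂ (n : ℕ) (_ : 1 ≤ n), ⋃ w : Fin n → Bool, wordCompNA ψ 1 n w '' B) ⊆
        γ '' Set.Icc 0 1 := by
  obtain ⟨N, hN⟩ := hLipθ
  obtain ⟨r, hθr, hr0, hr2⟩ : ∃ r : ℝ≥0, θ ≤ r ∧ 0 < r ∧ (r : ℝ) < 1 / 2 :=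
    ⟨⟨max θ (1 / 4), by positivity⟩, le_max_left _ _,
      NNReal.coe_pos.1 (lt_max_of_lt_right (by norm_num)), max_lt hθ.2 (by norm_num)⟩
  obtain ⟨c, hcr, hc⟩ := exists_lipschitzWith_eventually_le (f := ψ) (r := r) (N := N)
    (fun j b => let ⟨_, _, hK⟩ := hLipAll j b
      ⟨_, LipschitzWith.of_dist_le' (by simpa only [dist_eq_norm] using hK)⟩)
    fun j hj b => LipschitzWith.of_dist_le_mul fun p q => by
      simpa only [dist_eq_norm] using
        (hN j hj b p q).trans (mul_le_mul_of_nonneg_right hθr (norm_nonneg _))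
  obtain ⟨C, hC⟩ := NNReal.exists_prod_range_le_mul_pow (c := fun i => c (1 + i)) (N := N) hr0
    fun j hj => hcr (1 + j) (by omega)
  obtain ⟨x, hx, hAx⟩ := exists_coding_of_lipschitzWith_wordCompNA
    (fun n w => (lipschitzWith_wordCompNA ψ hc n 1 w).weaken (hC n))
    (NNReal.coe_lt_one.1 (by linarith)) hBcpt hBne fun j b => mapsTo_iff_image_subset.2 (hinv j b)
  obtain ⟨L, γ, hγ, hγt⟩ :=
    exists_lipschitzWith_comp_eq (dist_le_mul_dist_cantorParam r.coe_nonneg hr2 (by positivity) hx)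
  refine ⟨L, γ, L.2, fun s _ u _ => ?_, hAx.trans (closure_minimal ?_ ?_)⟩
  · simpa only [dist_eq_norm (γ s), Real.dist_eq] using hγ.dist_le_mul s u
  · rintro _ ⟨W, rfl⟩
    exact ⟨cantorParam r W, cantorParam_mem_Icc r.coe_nonneg (by linarith) W, congrFun hγt W⟩
  · exact (isCompact_Icc.image hγ.continuous).isClosed
end
end

section
/- Let λ, μ ∈ ℝ with λ < 0 < μ. Let s : ℝ × ℝ → ℝ and z : ℝ × ℝ → ℝ be continuously differentiable functions satisfying: (i) μ·s(x,X) = s(z(x,X), λX) for all (x,X) ∈ ℝ²; (ii) s(λx, z(x,X)) + s(λX, z(x,X)) = 0 for all (x,X) ∈ ℝ²; (iii) z(1,0) = 1; (iv) ∂₁z(1,0) = μ; (v) ∂₁s(a,b) > 0 for all (a,b) ∈ ℝ². Then ∂₂s(1,0) > 0, and consequently −∂₂s(1,0)/∂₁s(1,0) < 0. -/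
/-!
Differentiate the midpoint equation (ii) at `(1,0)`, first in `x`, then in `X`, and the fixed
point equation (i) in `X`. Since `z(1,0) = 1`, the three identities only involve `s` at
`(1,0)`, `(λ,1)`, `(0,1)` and `q = ∂₂z(1,0)`. The first gives
`μ (∂₂s(λ,1) + ∂₂s(0,1)) = -λ ∂₁s(λ,1) > 0`, the second then forces `q > 0`, and the third reads
`(μ - λ) ∂₂s(1,0) = q ∂₁s(1,0) > 0`.
-/

section PartialDerivatives

variable {𝕜 F : Type*} [NontriviallyNormedField 𝕜] [NormedAddCommGroup F] [NormedSpace 𝕜 F]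
  {f : 𝕜 × 𝕜 → F}

theorem hasDerivAt_comp_prodMk {u v : 𝕜 → 𝕜} {u' v' t : 𝕜}
    (hf : DifferentiableAt 𝕜 f (u t, v t)) (hu : HasDerivAt u u' t) (hv : HasDerivAt v v' t) :
    HasDerivAt (fun t => f (u t, v t))
      (u' • fderiv 𝕜 f (u t, v t) (1, 0) + v' • fderiv 𝕜 f (u t, v t) (0, 1)) t := by
  refine (hf.hasFDerivAt.comp_hasDerivAt t (hu.prodMk hv)).congr_deriv ?_
  rw [← map_smul, ← map_smul, ← map_add]
  simp

theorem hasDerivAt_fst_slice {a b : 𝕜} (hf : DifferentiableAt 𝕜 f (a, b)) :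
    HasDerivAt (fun x => f (x, b)) (fderiv 𝕜 f (a, b) (1, 0)) a := by
  simpa using hasDerivAt_comp_prodMk hf (hasDerivAt_id a) (hasDerivAt_const a b)

theorem hasDerivAt_snd_slice {a b : 𝕜} (hf : DifferentiableAt 𝕜 f (a, b)) :
    HasDerivAt (fun y => f (a, y)) (fderiv 𝕜 f (a, b) (0, 1)) b := by
  simpa using hasDerivAt_comp_prodMk hf (hasDerivAt_const b a) (hasDerivAt_id b)

end PartialDerivatives

section EKW

variable {s z : ℝ × ℝ → ℝ} {lam mu : ℝ}

theorem fixedPoint_deriv_snd (hs : DifferentiableAt ℝ s (1, 0))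
    (hz : DifferentiableAt ℝ z (1, 0))
    (hfix : ∀ x X : ℝ, mu * s (x, X) = s (z (x, X), lam * X)) (hz10 : z (1, 0) = 1) :
    (mu - lam) * fderiv ℝ s (1, 0) (0, 1) =
      fderiv ℝ z (1, 0) (0, 1) * fderiv ℝ s (1, 0) (1, 0) := by
  have hlhs := (hasDerivAt_snd_slice hs).const_mul mu
  have hrhs := hasDerivAt_comp_prodMk
    (by simpa [hz10] using hs : DifferentiableAt ℝ s (z (1, 0), lam * 0))
    (hasDerivAt_snd_slice hz) ((hasDerivAt_id' (0 : ℝ)).const_mul lam)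
  rw [funext (hfix 1)] at hlhs
  simp only [hz10, mul_zero, smul_eq_mul, mul_one] at hrhs
  linarith [hlhs.unique hrhs]

theorem midpoint_deriv_fst (hsLam : DifferentiableAt ℝ s (lam, 1))
    (hs0 : DifferentiableAt ℝ s (0, 1)) (hz : DifferentiableAt ℝ z (1, 0))
    (hmid : ∀ x X : ℝ, s (lam * x, z (x, X)) + s (lam * X, z (x, X)) = 0)
    (hz10 : z (1, 0) = 1) (hz1 : fderiv ℝ z (1, 0) (1, 0) = mu) :
    lam * fderiv ℝ s (lam, 1) (1, 0) +
      mu * (fderiv ℝ s (lam, 1) (0, 1) + fderiv ℝ s (0, 1) (0, 1)) = 0 := by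
  have hzx := hz1 ▸ hasDerivAt_fst_slice hz
  have h₁ := hasDerivAt_comp_prodMk
    (by simpa [hz10] using hsLam : DifferentiableAt ℝ s (lam * 1, z (1, 0)))
    ((hasDerivAt_id' (1 : ℝ)).const_mul lam) hzx
  have h₂ := hasDerivAt_comp_prodMk
    (by simpa [hz10] using hs0 : DifferentiableAt ℝ s (lam * 0, z (1, 0)))
    (hasDerivAt_const 1 (lam * 0)) hzx
  have hzero := (h₁.add h₂).unique
    ((hasDerivAt_const (1 : ℝ) (0 : ℝ)).congr_of_eventuallyEq (.of_forall fun x => hmid x 0))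
  simp only [hz10, mul_one, mul_zero, smul_eq_mul] at hzero
  linarith

theorem midpoint_deriv_snd (hsLam : DifferentiableAt ℝ s (lam, 1))
    (hs0 : DifferentiableAt ℝ s (0, 1)) (hz : DifferentiableAt ℝ z (1, 0))
    (hmid : ∀ x X : ℝ, s (lam * x, z (x, X)) + s (lam * X, z (x, X)) = 0)
    (hz10 : z (1, 0) = 1) :
    fderiv ℝ z (1, 0) (0, 1) * (fderiv ℝ s (lam, 1) (0, 1) + fderiv ℝ s (0, 1) (0, 1)) +
      lam * fderiv ℝ s (0, 1) (1, 0) = 0 := by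
  have hzX := hasDerivAt_snd_slice hz
  have h₁ := hasDerivAt_comp_prodMk
    (by simpa [hz10] using hsLam : DifferentiableAt ℝ s (lam * 1, z (1, 0)))
    (hasDerivAt_const 0 (lam * 1)) hzX
  have h₂ := hasDerivAt_comp_prodMk
    (by simpa [hz10] using hs0 : DifferentiableAt ℝ s (lam * 0, z (1, 0)))
    ((hasDerivAt_id' (0 : ℝ)).const_mul lam) hzX
  have hzero := (h₁.add h₂).unique
    ((hasDerivAt_const (0 : ℝ) (0 : ℝ)).congr_of_eventuallyEq (.of_forall fun X => hmid 1 X))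
  simp only [hz10, mul_one, mul_zero, smul_eq_mul] at hzero
  linarith

end EKW

/-- Lemma 4.1 of the paper: at the tip of the Eckmann–Koch–Wittwer renormalization
fixed point one has `∂₂s(1,0) > 0`, hence `∂X/∂x(τ) = -∂₂s(1,0)/∂₁s(1,0) < 0`.
Here `∂₁f(a,b) = fderiv ℝ f (a,b) (1,0)` and `∂₂f(a,b) = fderiv ℝ f (a,b) (0,1)`. -/
theorem ekw_tip_derivative_neg
    (lam mu : ℝ) (hlam : lam < 0) (hmu : 0 < mu)
    (s z : ℝ × ℝ → ℝ) (hs : ContDiff ℝ 1 s) (hz : ContDiff ℝ 1 z)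
    -- (i) the EKW fixed point equation μ·s(x,X) = s(z(x,X), λX)
    (hfix : ∀ x X : ℝ, mu * s (x, X) = s (z (x, X), lam * X))
    -- (ii) the defining equation of the midpoint function z
    (hmid : ∀ x X : ℝ, s (lam * x, z (x, X)) + s (lam * X, z (x, X)) = 0)
    -- (iii) normalization z(1,0) = 1
    (hz10 : z (1, 0) = 1)
    -- (iv) normalization ∂₁z(1,0) = μ
    (hz1 : fderiv ℝ z (1, 0) (1, 0) = mu)
    -- (v) negative twist condition: ∂₁s > 0 everywhere
    (hs1pos : ∀ p : ℝ × ℝ, 0 < fderiv ℝ s p (1, 0)) :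
    0 < fderiv ℝ s (1, 0) (0, 1) ∧
      -(fderiv ℝ s (1, 0) (0, 1)) / fderiv ℝ s (1, 0) (1, 0) < 0 := by
  have hs' := hs.differentiable one_ne_zero
  have hz' := (hz.differentiable one_ne_zero) (1, 0)
  have hmid_x := midpoint_deriv_fst (hs' _) (hs' _) hz' hmid hz10 hz1
  have hmid_X := midpoint_deriv_snd (hs' _) (hs' _) hz' hmid hz10
  have hfix_X := fixedPoint_deriv_snd (hs' _) hz' hfix hz10
  have hsum : 0 < fderiv ℝ s (lam, 1) (0, 1) + fderiv ℝ s (0, 1) (0, 1) := by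
    nlinarith [hs1pos (lam, 1)]
  have hq : 0 < fderiv ℝ z (1, 0) (0, 1) := by
    nlinarith [hs1pos (0, 1)]
  have hb : 0 < fderiv ℝ s (1, 0) (0, 1) := by
    nlinarith [hs1pos (1, 0)]
  exact ⟨hb, div_neg_of_neg_of_pos (neg_neg_of_pos hb) (hs1pos _)⟩
end

section
/- Let λ, μ ∈ ℝ with λ < 0 < μ. Let s : ℝ × ℝ → ℝ and z : ℝ × ℝ → ℝ be continuously differentiable functions satisfying s(λx, z(x,X)) + s(λX, z(x,X)) = 0 for all (x,X) ∈ ℝ², with z(1,0) = 1 and ∂₁z(1,0) = μ, and suppose ∂₁s(a,b) > 0 for all (a,b) ∈ ℝ². Then ∂₂z(1,0) > 0. -/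
/-!
Differentiate the midpoint equation at `(1, 0)`, where `z = 1`, so `s` is evaluated at `(λ, 1)` and
`(0, 1)`. Writing `aᵢ, bᵢ` for the partials of `s` there, the `x`-derivative gives
`λ a₁ + μ (b₁ + b₂) = 0`, hence `b₁ + b₂ > 0`, and the `X`-derivative gives
`λ a₂ + ∂₂z(1,0) (b₁ + b₂) = 0`, hence `∂₂z(1,0) > 0`.
-/

open ContinuousLinearMap

theorem ContinuousLinearMap.apply_prod_eq_add (D : ℝ × ℝ →L[ℝ] ℝ) (a b : ℝ) :
    D (a, b) = a * D (1, 0) + b * D (0, 1) := by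
  have hab : ((a, b) : ℝ × ℝ) = a • ((1, 0) : ℝ × ℝ) + b • ((0, 1) : ℝ × ℝ) := by
    simp
  rw [hab, map_add, map_smul, map_smul, smul_eq_mul, smul_eq_mul]

theorem fderiv_add_eq_zero_of_add_eq_zero {E : Type*} [NormedAddCommGroup E] [NormedSpace ℝ E]
    {s : ℝ × ℝ → ℝ} {z : E → ℝ} {ℓ₁ ℓ₂ : E →L[ℝ] ℝ} {p : E}
    (hz : DifferentiableAt ℝ z p) (hs₁ : DifferentiableAt ℝ s (ℓ₁ p, z p))
    (hs₂ : DifferentiableAt ℝ s (ℓ₂ p, z p)) (h : ∀ q, s (ℓ₁ q, z q) + s (ℓ₂ q, z q) = 0)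
    (v : E) :
    fderiv ℝ s (ℓ₁ p, z p) (ℓ₁ v, fderiv ℝ z p v)
      + fderiv ℝ s (ℓ₂ p, z p) (ℓ₂ v, fderiv ℝ z p v) = 0 := by
  have hF : HasFDerivAt (fun q => s (ℓ₁ q, z q) + s (ℓ₂ q, z q)) _ p :=
    (hs₁.hasFDerivAt.comp p (ℓ₁.hasFDerivAt.prodMk hz.hasFDerivAt)).add
      (hs₂.hasFDerivAt.comp p (ℓ₂.hasFDerivAt.prodMk hz.hasFDerivAt))
  rw [funext h] at hF
  simpa using congrArg (· v) (hF.unique (hasFDerivAt_const 0 p))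

/-- The key intermediate positivity claim in Lemma 4.1 of the paper: under the defining
equation `s(λx, z(x,X)) + s(λX, z(x,X)) = 0` of the midpoint function `z`, the
normalizations `z(1,0) = 1` and `∂₁z(1,0) = μ`, and the negative twist condition
`∂₁s > 0`, with `λ < 0 < μ`, one has `∂₂z(1,0) > 0`.
Here `∂₁f(a,b) = fderiv ℝ f (a,b) (1,0)` and `∂₂f(a,b) = fderiv ℝ f (a,b) (0,1)`. -/
theorem midpoint_second_partial_pos
    (lam mu : ℝ) (hlam : lam < 0) (hmu : 0 < mu)
    (s z : ℝ × ℝ → ℝ) (hs : ContDiff ℝ 1 s) (hz : ContDiff ℝ 1 z)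
    (hmid : ∀ x X : ℝ, s (lam * x, z (x, X)) + s (lam * X, z (x, X)) = 0)
    (hz10 : z (1, 0) = 1)
    (hz1 : fderiv ℝ z (1, 0) (1, 0) = mu)
    (hs1pos : ∀ p : ℝ × ℝ, 0 < fderiv ℝ s p (1, 0)) :
    0 < fderiv ℝ z (1, 0) (0, 1) := by
  have hsd : ∀ p, DifferentiableAt ℝ s p := hs.differentiable one_ne_zero
  have hlin := fderiv_add_eq_zero_of_add_eq_zero (ℓ₁ := lam • fst ℝ ℝ ℝ) (ℓ₂ := lam • snd ℝ ℝ ℝ)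
    (hz.differentiable one_ne_zero (1, 0)) (hsd _) (hsd _) fun q => hmid q.1 q.2
  have hx := hlin (1, 0)
  have hX := hlin (0, 1)
  simp only [smul_apply, coe_fst', coe_snd', smul_eq_mul, mul_one, mul_zero, hz10, hz1] at hx hX
  rw [apply_prod_eq_add (fderiv ℝ s (lam, 1)), apply_prod_eq_add (fderiv ℝ s (0, 1))] at hx hX
  have ha₁ := hs1pos (lam, 1)
  have ha₂ := hs1pos (0, 1)
  have hb : 0 < fderiv ℝ s (lam, 1) (0, 1) + fderiv ℝ s (0, 1) (0, 1) := by nlinarith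
  nlinarith [mul_pos hb ha₂]
end

section
/- Let λ, μ, p ∈ ℝ with λ ≠ 1. Define Λ, ψ₀, h, h⁻ : ℝ² → ℝ² by Λ(x,y) = (λx, μy), ψ₀(x,y) = (λx + p, μy), h(x,y) = (x − p/(1−λ), y), and h⁻(x,y) = (x + p/(1−λ), y). Suppose F : ℝ² → ℝ² satisfies Λ ∘ F = F ∘ F ∘ Λ. Then G := h⁻ ∘ F ∘ h satisfies ψ₀ ∘ G = G ∘ G ∘ ψ₀. -/
theorem comp_conj_eq_conj_comp_conj {α : Type*} {Λ F h hinv : α → α}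
    (h_hinv : Function.LeftInverse h hinv) (hF : Λ ∘ F = F ∘ F ∘ Λ) :
    (hinv ∘ Λ ∘ h) ∘ (hinv ∘ F ∘ h) =
      (hinv ∘ F ∘ h) ∘ (hinv ∘ F ∘ h) ∘ (hinv ∘ Λ ∘ h) := by
  funext x
  simp only [Function.comp_apply, h_hinv _]
  exact congrArg hinv (congrFun hF (h x))

/-- `p / (1 - λ)` is the fixed point of `x ↦ λ x + p`, so `ψ₀` is `Λ` centred there. -/
theorem affine_rescaling_eq_conj_translate {lam : ℝ} (mu p : ℝ) (hlam : lam ≠ 1) :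
    (fun q : ℝ × ℝ => (lam * q.1 + p, mu * q.2)) =
      (fun q : ℝ × ℝ => (q.1 + p / (1 - lam), q.2)) ∘
        (fun q : ℝ × ℝ => (lam * q.1, mu * q.2)) ∘
        (fun q : ℝ × ℝ => (q.1 - p / (1 - lam), q.2)) := by
  have h1 : (1 : ℝ) - lam ≠ 0 := sub_ne_zero.mpr hlam.symm
  funext q
  simp only [Function.comp_apply, Prod.mk.injEq, and_true]
  field_simp
  ring

/-- Lemma 4.2 of the paper: if `F` is a fixed point of the Eckmann–Koch–Wittwer
renormalization, i.e. `Λ ∘ F = F² ∘ Λ` with `Λ(x,y) = (λx, μy)`, then the map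
`G = h⁻¹ ∘ F ∘ h`, where `h(x,y) = (x − p/(1−λ), y)` is the translation in the
`x`-direction, satisfies `ψ₀ ∘ G = G² ∘ ψ₀` with `ψ₀(x,y) = (λx + p, μy)`;
that is, `G` is a fixed point of the Gaidashev–Johnson–Martens renormalization. -/
theorem ekw_fixed_point_conjugate_to_gjm_fixed_point
    (lam mu p : ℝ) (hlam : lam ≠ 1)
    (F : ℝ × ℝ → ℝ × ℝ)
    (hF : (fun q : ℝ × ℝ => (lam * q.1, mu * q.2)) ∘ F =
          F ∘ F ∘ (fun q : ℝ × ℝ => (lam * q.1, mu * q.2))) :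
    (fun q : ℝ × ℝ => (lam * q.1 + p, mu * q.2)) ∘
        ((fun q : ℝ × ℝ => (q.1 + p / (1 - lam), q.2)) ∘ F ∘
          (fun q : ℝ × ℝ => (q.1 - p / (1 - lam), q.2))) =
      ((fun q : ℝ × ℝ => (q.1 + p / (1 - lam), q.2)) ∘ F ∘
          (fun q : ℝ × ℝ => (q.1 - p / (1 - lam), q.2))) ∘
        ((fun q : ℝ × ℝ => (q.1 + p / (1 - lam), q.2)) ∘ F ∘
          (fun q : ℝ × ℝ => (q.1 - p / (1 - lam), q.2))) ∘
        (fun q : ℝ × ℝ => (lam * q.1 + p, mu * q.2)) := by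
  rw [affine_rescaling_eq_conj_translate mu p hlam]
  exact comp_conj_eq_conj_comp_conj (fun q => by simp) hF
end

section
/- Let γ : [0,1] → ℝ² be an injective, continuously differentiable curve with γ′(u) ≠ 0 for all u ∈ [0,1]. Let O ⊆ γ([0,1]) be a set every point of which is an accumulation point of O, and let F : ℝ² → ℝ² be a map that is differentiable at every point of O and satisfies F(O) ⊆ O. Then for every t ∈ [0,1] with γ(t) ∈ O and every u ∈ [0,1] with γ(u) = F(γ(t)), there exists c ∈ ℝ such that DF(γ(t))(γ′(t)) = c·γ′(u). -/
/-!
Pick points `γ sₙ ∈ O \ {γ t}` tending to `γ t` and write `F (γ sₙ) = γ rₙ`. Since `γ` is a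
homeomorphism of `[0,1]` onto its image, `sₙ → t` and `rₙ → u`. The chain rule makes the chords
`(sₙ - t)⁻¹ • (F (γ sₙ) - F (γ t))` tend to `DF(γ t)(γ′ t)`, while each of them equals
`λₙ • gₙ` with `gₙ → γ′ u ≠ 0` the chord slopes of `γ` at `u`. A limit of multiples of vectors
tending to a nonzero `v` is a multiple of `v`.
-/

noncomputable section

open Filter Topology Function

theorem Set.InjOn.tendsto_nhdsWithin_of_tendsto_comp {X Y α : Type*} [TopologicalSpace X]
    [TopologicalSpace Y] [T2Space Y] {f : X → Y} {K : Set X} (hinj : K.InjOn f)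
    (hK : IsCompact K) (hf : ContinuousOn f K) {l : Filter α} {s : α → X} (hs : ∀ a, s a ∈ K)
    {x : X} (hx : x ∈ K) (h : Tendsto (f ∘ s) l (𝓝 (f x))) : Tendsto s l (𝓝[K] x) := by
  have : CompactSpace K := isCompact_iff_compactSpace.mp hK
  have hemb : IsClosedEmbedding (K.domRestrict f) :=
    hf.domRestrict.isClosedEmbedding hinj.injective
  have hlift : Tendsto (fun a => (⟨s a, hs a⟩ : K)) l (𝓝 ⟨x, hx⟩) :=
    hemb.tendsto_nhds_iff.mpr h
  exact tendsto_nhdsWithin_iff.mpr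
    ⟨continuous_subtype_val.continuousAt.tendsto.comp hlift, Eventually.of_forall hs⟩

theorem exists_eq_smul_of_tendsto_smul {𝕜 V α : Type*} [NontriviallyNormedField 𝕜]
    [AddCommGroup V] [TopologicalSpace V] [T2Space V] [Module 𝕜 V] [ContinuousSMul 𝕜 V]
    [SeparatingDual 𝕜 V] {l : Filter α} [l.NeBot] {c : α → 𝕜} {g : α → V} {v w : V}
    (hv : v ≠ 0) (hg : Tendsto g l (𝓝 v)) (hcg : Tendsto (fun a => c a • g a) l (𝓝 w)) :
    ∃ c₀ : 𝕜, w = c₀ • v := by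
  obtain ⟨φ, hφv⟩ := SeparatingDual.exists_eq_one (R := 𝕜) hv
  have hφg : Tendsto (fun a => φ (g a)) l (𝓝 1) := hφv ▸ (φ.continuous.tendsto v).comp hg
  have hφcg : Tendsto (fun a => c a * φ (g a)) l (𝓝 (φ w)) := by
    simpa [comp_def] using (φ.continuous.tendsto w).comp hcg
  -- `φ` reads off the coefficient: `c a = φ (c a • g a) / φ (g a)` once `φ (g a) ≠ 0`.
  have hc : Tendsto c l (𝓝 (φ w)) := by
    refine (div_one (φ w) ▸ hφcg.div hφg one_ne_zero).congr' ?_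
    filter_upwards [hφg.eventually_ne one_ne_zero] with a ha
    exact mul_div_cancel_right₀ (c a) ha
  exact ⟨φ w, tendsto_nhds_unique hcg (hc.smul hg)⟩

section ChordSlope

variable {𝕜 E : Type*} [NontriviallyNormedField 𝕜] [DecidableEq 𝕜] [NormedAddCommGroup E]
  [NormedSpace 𝕜 E]

def chordSlope (f : 𝕜 → E) (a : 𝕜) (v : E) : 𝕜 → E :=
  update (slope f a) a v

theorem sub_smul_chordSlope (f : 𝕜 → E) (a : 𝕜) (v : E) (b : 𝕜) :
    (b - a) • chordSlope f a v b = f b - f a := by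
  by_cases hb : b = a
  · simp [hb]
  · simp [chordSlope, hb, sub_smul_slope]

theorem HasDerivWithinAt.tendsto_chordSlope {f : 𝕜 → E} {v : E} {s : Set 𝕜} {a : 𝕜}
    (h : HasDerivWithinAt f v s a) : Tendsto (chordSlope f a v) (𝓝[s] a) (𝓝 v) := by
  simpa [chordSlope, ContinuousWithinAt] using
    continuousWithinAt_update_same.mpr (hasDerivWithinAt_iff_tendsto_slope.mp h)

end ChordSlope

/-- The key step of Theorem 4.5 of the paper: if an injective, regular `C¹` curve
`γ : [0,1] → ℝ²` contains a set `O` without isolated points that is invariant under a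
map `F` differentiable on `O`, then the field of tangent lines of `γ` along `O` is
invariant: `DF(γ(t))(γ′(t))` is a scalar multiple of `γ′(u)` whenever
`γ(t) ∈ O` and `γ(u) = F(γ(t))`. Here `γ′` is `derivWithin γ (Set.Icc 0 1)`. -/
theorem tangent_line_field_invariant
    (γ : ℝ → E2)
    (hγinj : Set.InjOn γ (Set.Icc 0 1))
    (hγC1 : ContDiffOn ℝ 1 γ (Set.Icc 0 1))
    (hγreg : ∀ u ∈ Set.Icc (0 : ℝ) 1, derivWithin γ (Set.Icc 0 1) u ≠ 0)
    (O : Set E2) (hO : O ⊆ γ '' Set.Icc 0 1)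
    (hacc : ∀ p ∈ O, p ∈ closure (O \ {p}))
    (F : E2 → E2)
    (hFdiff : ∀ p ∈ O, DifferentiableAt ℝ F p)
    (hFO : F '' O ⊆ O) :
    ∀ t ∈ Set.Icc (0 : ℝ) 1, γ t ∈ O →
      ∀ u ∈ Set.Icc (0 : ℝ) 1, γ u = F (γ t) →
        ∃ c : ℝ, fderiv ℝ F (γ t) (derivWithin γ (Set.Icc 0 1) t) =
          c • derivWithin γ (Set.Icc 0 1) u := by
  intro t ht hγt u hu hγu
  set K : Set ℝ := Set.Icc 0 1
  have hγd : ∀ x ∈ K, HasDerivWithinAt γ (derivWithin γ K x) K x := fun x hx =>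
    ((hγC1.differentiableOn one_ne_zero) x hx).hasDerivWithinAt
  have hinv : ∀ {w : ℕ → ℝ} {x : ℝ}, (∀ n, w n ∈ K) → x ∈ K →
      Tendsto (γ ∘ w) atTop (𝓝 (γ x)) → Tendsto w atTop (𝓝[K] x) :=
    fun hw hx => hγinj.tendsto_nhdsWithin_of_tendsto_comp isCompact_Icc hγC1.continuousOn hw hx
  obtain ⟨q, hqO, hq⟩ := mem_closure_iff_seq_limit.mp (hacc _ hγt)
  choose s hsK hγs using fun n => hO (hqO n).1
  choose r hrK hγr using fun n => hO (hFO ⟨q n, (hqO n).1, rfl⟩)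
  have hs : Tendsto s atTop (𝓝[K \ {t}] t) := by
    refine tendsto_nhdsWithin_iff.mpr ⟨?_, Eventually.of_forall fun n => ⟨hsK n, ?_⟩⟩
    · exact (hinv hsK ht (by simpa [comp_def, hγs] using hq)).mono_right nhdsWithin_le_nhds
    · exact fun hst => (hqO n).2 (by rw [← hγs, hst]; rfl)
  have hr : Tendsto r atTop (𝓝[K] u) := hinv hrK hu <| by
    simpa [comp_def, hγr, hγu] using ((hFdiff _ hγt).continuousAt.tendsto).comp hq
  have hFγ : HasDerivWithinAt (F ∘ γ) (fderiv ℝ F (γ t) (derivWithin γ K t)) K t :=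
    (hFdiff _ hγt).hasFDerivAt.comp_hasDerivWithinAt t (hγd t ht)
  refine exists_eq_smul_of_tendsto_smul (c := fun n => (s n - t)⁻¹ * (r n - u)) (hγreg u hu)
    ((hγd u hu).tendsto_chordSlope.comp hr)
    (((hasDerivWithinAt_iff_tendsto_slope.mp hFγ).comp hs).congr fun n => ?_)
  simp only [comp_apply, mul_smul, sub_smul_chordSlope, slope_def_module, hγr, hγu, hγs]

end
end

section
/- Let γ : [0,1] → ℝ² be injective and continuous, let t ∈ [0,1], suppose γ is differentiable at t with γ′(t) ≠ 0, and set p = γ(t) and v = γ′(t)/‖γ′(t)‖. Let (qₙ) be a sequence of points of γ([0,1]) with qₙ ≠ p for all n and qₙ → p. Then the unit secant vectors uₙ = (qₙ − p)/‖qₙ − p‖ satisfy min(‖uₙ − v‖, ‖uₙ + v‖) → 0 as n → ∞. -/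
noncomputable section

/-!
Choose parameters `sₙ ∈ [0,1]` with `γ(sₙ) = qₙ`. A continuous injection of a compact set is a
homeomorphism onto its image, so `sₙ → t` and the difference quotients `(qₙ - p)/(sₙ - t)` tend
to `d`. The unit secant `uₙ` is, up to the sign of `sₙ - t`, the normalized difference quotient,
which tends to `v`.
-/

open Filter Topology NormedSpace

theorem Set.InjOn.tendsto_of_tendsto_comp {X Y α : Type*} [TopologicalSpace X]
    [TopologicalSpace Y] [T2Space Y] {K : Set X} {f : X → Y} (hinj : Set.InjOn f K)
    (hK : IsCompact K) (hf : ContinuousOn f K) {l : Filter α} {s : α → X}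
    (hs : ∀ᶠ n in l, s n ∈ K) {x : X} (hx : x ∈ K) (h : Tendsto (f ∘ s) l (𝓝 (f x))) :
    Tendsto s l (𝓝 x) := by
  refine hK.tendsto_nhds_of_unique_mapClusterPt hs fun y hy hcluster => hinj hy hx ?_
  have hfy : MapClusterPt (f y) l (f ∘ s) :=
    hcluster.tendsto_comp' <| (hf y hy).mono_left <|
      le_inf inf_le_left (inf_le_right.trans (le_principal_iff.mpr hs))
  exact eq_of_nhds_neBot (hfy.clusterPt.mono h).neBot

theorem NormedSpace.continuousAt_normalize {V : Type*} [NormedAddCommGroup V] [NormedSpace ℝ V]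
    {x : V} (hx : x ≠ 0) : ContinuousAt normalize x :=
  (continuous_norm.continuousAt.inv₀ (norm_ne_zero_iff.mpr hx)).smul continuousAt_id

theorem NormedSpace.min_norm_normalize_smul_sub_add_le {V : Type*} [NormedAddCommGroup V]
    [NormedSpace ℝ V] {r : ℝ} (hr : r ≠ 0) (x w : V) :
    min ‖normalize (r • x) - w‖ ‖normalize (r • x) + w‖ ≤ ‖normalize x - w‖ := by
  rcases lt_or_gt_of_ne hr with hneg | hpos
  · rw [normalize_smul_of_neg hneg, neg_add_eq_sub, norm_sub_rev w]
    exact min_le_right _ _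
  · rw [normalize_smul_of_pos hpos]
    exact min_le_left _ _

/-- The analytic ingredient of Theorem 4.5 of the paper: if `γ : [0,1] → ℝ²` is an
injective continuous curve, differentiable at `t` (within `[0,1]`) with nonzero
derivative `d`, and `(qₙ)` is a sequence of points of the curve with `qₙ ≠ p := γ(t)`
and `qₙ → p`, then the unit secant vectors `uₙ = (qₙ − p)/‖qₙ − p‖` converge to the
tangent line at `p`: `min(‖uₙ − v‖, ‖uₙ + v‖) → 0`, where `v = d/‖d‖`. -/
theorem unit_secants_tend_to_tangent
    (γ : ℝ → E2)
    (hγinj : Set.InjOn γ (Set.Icc 0 1))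
    (hγcont : ContinuousOn γ (Set.Icc 0 1))
    (t : ℝ) (ht : t ∈ Set.Icc (0 : ℝ) 1)
    (d : E2) (hder : HasDerivWithinAt γ d (Set.Icc 0 1) t) (hd : d ≠ 0)
    (q : ℕ → E2)
    (hq : ∀ n, q n ∈ γ '' Set.Icc 0 1)
    (hqne : ∀ n, q n ≠ γ t)
    (hqlim : Filter.Tendsto q Filter.atTop (nhds (γ t))) :
    Filter.Tendsto
      (fun n : ℕ =>
        min ‖(‖q n - γ t‖⁻¹ • (q n - γ t)) - (‖d‖⁻¹ • d)‖
            ‖(‖q n - γ t‖⁻¹ • (q n - γ t)) + (‖d‖⁻¹ • d)‖)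
      Filter.atTop (nhds 0) := by
  choose s hs hγs using hq
  have hsne : ∀ n, s n ≠ t := fun n h => hqne n (by rw [← hγs n, h])
  have hst : Tendsto s atTop (𝓝 t) :=
    hγinj.tendsto_of_tendsto_comp isCompact_Icc hγcont (.of_forall hs) ht
      (by simpa only [Function.comp_def, hγs] using hqlim)
  have hslope : Tendsto (fun n => slope γ t (s n)) atTop (𝓝 d) :=
    (hasDerivWithinAt_iff_tendsto_slope.mp hder).comp <|
      tendsto_nhdsWithin_iff.mpr ⟨hst, .of_forall fun n => ⟨hs n, hsne n⟩⟩
  refine squeeze_zero (fun n => le_min (norm_nonneg _) (norm_nonneg _)) (fun n => ?_)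
    (tendsto_iff_norm_sub_tendsto_zero.mp ((continuousAt_normalize hd).tendsto.comp hslope))
  have hsecant : q n - γ t = (s n - t) • slope γ t (s n) := by
    rw [sub_smul_slope, vsub_eq_sub, hγs]
  rw [hsecant]
  exact min_norm_normalize_smul_sub_add_le (sub_ne_zero.mpr (hsne n)) _ _
end
end
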